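/- arXiv:2508.16904 — 4 statements merged into one kernel-verified Lean document; each statement's English description precedes it below -/
import Mathlib

section
/- Let I ⊂ (0, π) be an interval and u : I → ℝ a differentiable function with 0 < u(θ) < u_max for all θ ∈ I, satisfying the ordinary differential equation (c(u(θ))² − u(θ)²)·u′(θ) + cot θ·c(u(θ))²·u(θ) = 0 for all θ ∈ I. Then the quantity (2c₀² − (γ−1)u(θ)²)·(u(θ)·sin θ)^{γ−1} is constant on I. -/
open Real Set Filter Topology

/-- Maximal speed `u_max = √(2c₀²/(γ−1))`. -/
noncomputable def uMax (γ c₀ : ℝ) : ℝ := Real.sqrt (2 * c₀ ^ 2 / (γ - 1))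

/-- Critical (sonic) speed `c_* = √(2c₀²/(γ+1))`. -/
noncomputable def cStar (γ c₀ : ℝ) : ℝ := Real.sqrt (2 * c₀ ^ 2 / (γ + 1))

/-- Local sonic speed `c(u) = √(c₀² − ((γ−1)/2)u²)`. -/
noncomputable def sonic (γ c₀ u : ℝ) : ℝ := Real.sqrt (c₀ ^ 2 - (γ - 1) / 2 * u ^ 2)

/-- Density `ρ(u) = ((c₀² − ((γ−1)/2)u²)/γ)^{1/(γ−1)}`. -/
noncomputable def dens (γ c₀ u : ℝ) : ℝ :=
  ((c₀ ^ 2 - (γ - 1) / 2 * u ^ 2) / γ) ^ ((1 : ℝ) / (γ - 1))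

/-- Mass flux `F(u) = ρ(u)·u`. -/
noncomputable def flux (γ c₀ u : ℝ) : ℝ := dens γ c₀ u * u

/-- Pressure `p(u) = ρ(u)^γ`. -/
noncomputable def pres (γ c₀ u : ℝ) : ℝ := dens γ c₀ u ^ γ

/- Along a solution, `c(u)² = c₀² − ((γ−1)/2)u²`, and differentiating
`(2c₀² − (γ−1)u²)(u sin θ)^{γ−1}` gives `2(γ−1)(u sin θ)^{γ−2} sin θ` times the left-hand side of the
ODE. So the derivative vanishes on the interval `I`. -/

theorem Convex.eq_of_hasDerivWithinAt_eq_zero {s : Set ℝ} (hs : Convex ℝ s) {f : ℝ → ℝ}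
    (hf : ∀ x ∈ s, HasDerivWithinAt f 0 s x) {x y : ℝ} (hx : x ∈ s) (hy : y ∈ s) :
    f x = f y := by
  have h := hs.norm_image_sub_le_of_norm_hasDerivWithin_le (f' := fun _ => 0) (C := 0) hf
    (fun _ _ => by simp) hy hx
  simpa [sub_eq_zero] using h

section SphereFlow

variable {γ c₀ u : ℝ}

theorem sonic_radicand_pos (hu : u ∈ Ioo 0 (uMax γ c₀)) : 0 < c₀ ^ 2 - (γ - 1) / 2 * u ^ 2 := by
  have hq : 0 < 2 * c₀ ^ 2 / (γ - 1) := Real.sqrt_pos.mp (hu.1.trans hu.2)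
  have hγ : 0 < γ - 1 := by
    rcases div_pos_iff.mp hq with h | h
    · exact h.2
    · nlinarith [sq_nonneg c₀]
  have hu2 : u ^ 2 < 2 * c₀ ^ 2 / (γ - 1) := (Real.lt_sqrt hu.1.le).mp hu.2
  have := (lt_div_iff₀ hγ).mp hu2
  linarith

theorem sonic_sq (hu : u ∈ Ioo 0 (uMax γ c₀)) :
    sonic γ c₀ u ^ 2 = c₀ ^ 2 - (γ - 1) / 2 * u ^ 2 :=
  Real.sq_sqrt (sonic_radicand_pos hu).le

theorem sonic_ode_mul_sin {θ u' : ℝ} (hu : u ∈ Ioo 0 (uMax γ c₀)) (hθ : sin θ ≠ 0)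
    (hode : (sonic γ c₀ u ^ 2 - u ^ 2) * u' + cot θ * sonic γ c₀ u ^ 2 * u = 0) :
    (c₀ ^ 2 - (γ - 1) / 2 * u ^ 2 - u ^ 2) * u' * sin θ +
      (c₀ ^ 2 - (γ - 1) / 2 * u ^ 2) * u * cos θ = 0 := by
  have h := congrArg (· * sin θ) hode
  simp only [sonic_sq hu, Real.cot_eq_cos_div_sin, zero_mul] at h
  rw [← h]
  field_simp

end SphereFlow

noncomputable def sphereFirstIntegral (γ c₀ u θ : ℝ) : ℝ :=
  (2 * c₀ ^ 2 - (γ - 1) * u ^ 2) * (u * sin θ) ^ (γ - 1)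

theorem HasDerivWithinAt.sphereFirstIntegral {γ c₀ θ : ℝ} {s : Set ℝ} {u : ℝ → ℝ} {u' : ℝ}
    (hu : HasDerivWithinAt u u' s θ) (hθ : u θ * Real.sin θ ≠ 0) :
    HasDerivWithinAt (fun t => sphereFirstIntegral γ c₀ (u t) t)
      (2 * (γ - 1) * (u θ * Real.sin θ) ^ (γ - 2) *
        ((c₀ ^ 2 - (γ - 1) / 2 * u θ ^ 2 - u θ ^ 2) * u' * Real.sin θ +
          (c₀ ^ 2 - (γ - 1) / 2 * u θ ^ 2) * u θ * Real.cos θ)) s θ := by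
  have hA := ((hu.pow 2).const_mul (γ - 1)).const_sub (2 * c₀ ^ 2)
  have hB := (hu.mul (Real.hasDerivAt_sin θ).hasDerivWithinAt).rpow_const (p := γ - 1) (Or.inl hθ)
  refine (hA.mul hB).congr_deriv ?_
  have hsplit :
      (u θ * Real.sin θ) ^ (γ - 1) = (u θ * Real.sin θ) ^ (γ - 2) * (u θ * Real.sin θ) := by
    rw [← Real.rpow_add_one hθ]; ring_nf
  simp only [Pi.mul_apply, Pi.pow_apply]
  rw [hsplit, show γ - 1 - 1 = γ - 2 by ring]
  ring

theorem first_integral_on_sphere_general (γ c₀ : ℝ)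
    (I : Set ℝ) (hI : I ⊆ Set.Ioo 0 π) (hIc : I.OrdConnected)
    (u u' : ℝ → ℝ)
    (hderiv : ∀ θ ∈ I, HasDerivWithinAt u (u' θ) I θ)
    (hrange : ∀ θ ∈ I, u θ ∈ Set.Ioo 0 (uMax γ c₀))
    (hode : ∀ θ ∈ I,
      (sonic γ c₀ (u θ) ^ 2 - u θ ^ 2) * u' θ +
        Real.cot θ * sonic γ c₀ (u θ) ^ 2 * u θ = 0) :
    ∀ θ₁ ∈ I, ∀ θ₂ ∈ I,
      (2 * c₀ ^ 2 - (γ - 1) * u θ₁ ^ 2) * (u θ₁ * Real.sin θ₁) ^ (γ - 1) =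
      (2 * c₀ ^ 2 - (γ - 1) * u θ₂ ^ 2) * (u θ₂ * Real.sin θ₂) ^ (γ - 1) := by
  refine fun θ₁ h₁ θ₂ h₂ => hIc.convex.eq_of_hasDerivWithinAt_eq_zero
    (f := fun θ => sphereFirstIntegral γ c₀ (u θ) θ) (fun θ hθ => ?_) h₁ h₂
  have hsin : sin θ ≠ 0 := (Real.sin_pos_of_pos_of_lt_pi (hI hθ).1 (hI hθ).2).ne'
  have hG := (hderiv θ hθ).sphereFirstIntegral (γ := γ) (c₀ := c₀)
    (mul_ne_zero (hrange θ hθ).1.ne' hsin)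
  rwa [sonic_ode_mul_sin (hrange θ hθ) hsin (hode θ hθ), mul_zero] at hG

/-- first integral of the symmetric potential flow ODE on the sphere:
`(2c₀² − (γ−1)u²)(u sin θ)^{γ−1}` is constant along solutions. -/
theorem first_integral_on_sphere (γ c₀ : ℝ) (hγ : 1 < γ) (hc₀ : 0 < c₀)
    (I : Set ℝ) (hI : I ⊆ Set.Ioo 0 π) (hIc : I.OrdConnected)
    (u u' : ℝ → ℝ)
    (hderiv : ∀ θ ∈ I, HasDerivWithinAt u (u' θ) I θ)
    (hrange : ∀ θ ∈ I, u θ ∈ Set.Ioo 0 (uMax γ c₀))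
    (hode : ∀ θ ∈ I,
      (sonic γ c₀ (u θ) ^ 2 - u θ ^ 2) * u' θ +
        Real.cot θ * sonic γ c₀ (u θ) ^ 2 * u θ = 0) :
    ∀ θ₁ ∈ I, ∀ θ₂ ∈ I,
      (2 * c₀ ^ 2 - (γ - 1) * u θ₁ ^ 2) * (u θ₁ * Real.sin θ₁) ^ (γ - 1) =
      (2 * c₀ ^ 2 - (γ - 1) * u θ₂ ^ 2) * (u θ₂ * Real.sin θ₂) ^ (γ - 1) :=
  first_integral_on_sphere_general γ c₀ I hI hIc u u' hderiv hrange hode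
end

section
/- Let I ⊂ (0, π) be an interval and u : I → ℝ a differentiable function with 0 < u(θ) < u_max for all θ ∈ I, satisfying (c(u(θ))² − u(θ)²)·u′(θ) + cot θ·c(u(θ))²·u(θ) = 0 for all θ ∈ I. Then the mass flux θ ↦ ρ(u(θ))·u(θ)·sin θ is constant on I (conservation of mass for the symmetric flow on the sphere). -/
open Real Set Filter Topology

/-! Bernoulli's law `c² = c₀² − ((γ−1)/2)u²` together with `c² = γρ^{γ−1}` gives `ρ'(u) = −ρu/c²`.
Hence the derivative of `ρ(u(θ))·u(θ)·sin θ` is `ρ sin θ / c²` times the left-hand side of the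
ODE, which vanishes, and a function with zero derivative on an interval is constant. -/

theorem Convex.eq_of_forall_hasDerivWithinAt_zero {E : Type*} [NormedAddCommGroup E]
    [NormedSpace ℝ E] {s : Set ℝ} {f : ℝ → E} (hs : Convex ℝ s)
    (hf : ∀ x ∈ s, HasDerivWithinAt f 0 s x) {x y : ℝ} (hx : x ∈ s) (hy : y ∈ s) :
    f x = f y := by
  have h := hs.norm_image_sub_le_of_norm_hasDerivWithin_le hf (fun _ _ => norm_zero.le) hx hy
  rw [zero_mul, norm_le_zero_iff, sub_eq_zero] at h
  exact h.symm

section GasDynamics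

variable {γ c₀ : ℝ}

theorem sonic_pos_of_abs_lt_uMax (hγ : 1 < γ) {u : ℝ} (hu : |u| < uMax γ c₀) :
    0 < sonic γ c₀ u := by
  rw [uMax, Real.lt_sqrt (abs_nonneg u), sq_abs, lt_div_iff₀ (by linarith)] at hu
  exact Real.sqrt_pos.mpr (by nlinarith)

theorem hasDerivAt_dens (hγ₀ : γ ≠ 0) (hγ₁ : γ ≠ 1) {u : ℝ} (hc : 0 < sonic γ c₀ u) :
    HasDerivAt (dens γ c₀) (-(dens γ c₀ u * u) / sonic γ c₀ u ^ 2) u := by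
  have hpos : 0 < c₀ ^ 2 - (γ - 1) / 2 * u ^ 2 := Real.sqrt_pos.mp hc
  have hsq : sonic γ c₀ u ^ 2 = c₀ ^ 2 - (γ - 1) / 2 * u ^ 2 := Real.sq_sqrt hpos.le
  have hA : HasDerivAt (fun v => (c₀ ^ 2 - (γ - 1) / 2 * v ^ 2) / γ) (-((γ - 1) * u) / γ) u :=
    ((((hasDerivAt_pow 2 u).const_mul ((γ - 1) / 2)).const_sub (c₀ ^ 2)).div_const γ).congr_deriv
      (by ring)
  have hA₀ : (c₀ ^ 2 - (γ - 1) / 2 * u ^ 2) / γ ≠ 0 := div_ne_zero hpos.ne' hγ₀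
  refine ((Real.hasDerivAt_rpow_const (p := 1 / (γ - 1)) (Or.inl hA₀)).comp u hA).congr_deriv ?_
  rw [hsq, Real.rpow_sub_one hA₀, dens]
  field_simp

theorem hasDerivWithinAt_dens_mul_mul_sin (hγ₀ : γ ≠ 0) (hγ₁ : γ ≠ 1) {u : ℝ → ℝ}
    {u' θ : ℝ} {s : Set ℝ} (hu : HasDerivWithinAt u u' s θ) (hc : 0 < sonic γ c₀ (u θ))
    (hsin : sin θ ≠ 0) :
    HasDerivWithinAt (fun t => dens γ c₀ (u t) * u t * sin t)
      (dens γ c₀ (u θ) * sin θ / sonic γ c₀ (u θ) ^ 2 *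
        ((sonic γ c₀ (u θ) ^ 2 - u θ ^ 2) * u' + cot θ * sonic γ c₀ (u θ) ^ 2 * u θ)) s θ := by
  have hρ := ((hasDerivAt_dens hγ₀ hγ₁ hc).comp_hasDerivWithinAt θ hu).fun_mul hu
  refine (hρ.fun_mul (hasDerivAt_sin θ).hasDerivWithinAt).congr_deriv ?_
  rw [cot_eq_cos_div_sin, Function.comp_apply]
  field_simp
  ring

end GasDynamics

theorem mass_flux_constant_on_sphere_general (γ c₀ : ℝ) (hγ : 1 < γ)
    (I : Set ℝ) (hI : I ⊆ Set.Ioo 0 π) (hIc : I.OrdConnected)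
    (u u' : ℝ → ℝ)
    (hderiv : ∀ θ ∈ I, HasDerivWithinAt u (u' θ) I θ)
    (hrange : ∀ θ ∈ I, u θ ∈ Set.Ioo 0 (uMax γ c₀))
    (hode : ∀ θ ∈ I,
      (sonic γ c₀ (u θ) ^ 2 - u θ ^ 2) * u' θ +
        Real.cot θ * sonic γ c₀ (u θ) ^ 2 * u θ = 0) :
    ∀ θ₁ ∈ I, ∀ θ₂ ∈ I,
      dens γ c₀ (u θ₁) * u θ₁ * Real.sin θ₁ = dens γ c₀ (u θ₂) * u θ₂ * Real.sin θ₂ := by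
  intro θ₁ h₁ θ₂ h₂
  refine hIc.convex.eq_of_forall_hasDerivWithinAt_zero
    (f := fun θ => dens γ c₀ (u θ) * u θ * sin θ) (fun θ hθ => ?_) h₁ h₂
  obtain ⟨hu₀, huMax⟩ := hrange θ hθ
  have hc : 0 < sonic γ c₀ (u θ) :=
    sonic_pos_of_abs_lt_uMax hγ (by rwa [abs_of_pos hu₀])
  have hsin : sin θ ≠ 0 := (sin_pos_of_pos_of_lt_pi (hI hθ).1 (hI hθ).2).ne'
  simpa only [hode θ hθ, mul_zero] using
    hasDerivWithinAt_dens_mul_mul_sin (by linarith) hγ.ne' (hderiv θ hθ) hc hsin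

/-- the mass flux `ρ(u(θ))·u(θ)·sin θ` is constant along solutions of the
symmetric potential flow ODE on the sphere. -/
theorem mass_flux_constant_on_sphere (γ c₀ : ℝ) (hγ : 1 < γ) (hc₀ : 0 < c₀)
    (I : Set ℝ) (hI : I ⊆ Set.Ioo 0 π) (hIc : I.OrdConnected)
    (u u' : ℝ → ℝ)
    (hderiv : ∀ θ ∈ I, HasDerivWithinAt u (u' θ) I θ)
    (hrange : ∀ θ ∈ I, u θ ∈ Set.Ioo 0 (uMax γ c₀))
    (hode : ∀ θ ∈ I,
      (sonic γ c₀ (u θ) ^ 2 - u θ ^ 2) * u' θ +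
        Real.cot θ * sonic γ c₀ (u θ) ^ 2 * u θ = 0) :
    ∀ θ₁ ∈ I, ∀ θ₂ ∈ I,
      dens γ c₀ (u θ₁) * u θ₁ * Real.sin θ₁ = dens γ c₀ (u θ₂) * u θ₂ * Real.sin θ₂ :=
  mass_flux_constant_on_sphere_general γ c₀ hγ I hI hIc u u' hderiv hrange hode
end

section
/- Let θ ∈ (0, π) with θ ≠ π/2, and suppose u is differentiable at θ with 0 < u(θ) < u_max and satisfies (c(u(θ))² − u(θ)²)·u′(θ) + cot θ·c(u(θ))²·u(θ) = 0. Then u(θ) ≠ c_*; that is, a solution of the symmetric potential flow ODE on the sphere cannot attain the sonic speed except possibly at θ = π/2. -/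
open Real Set Filter Topology

/-- a solution of the symmetric potential flow ODE on the sphere cannot
attain the critical (sonic) speed except possibly at `θ = π/2`. -/
theorem no_sonic_speed_off_equator (γ c₀ : ℝ) (hγ : 1 < γ) (hc₀ : 0 < c₀)
    (θ : ℝ) (hθ : θ ∈ Set.Ioo 0 π) (hθne : θ ≠ π / 2)
    (u : ℝ → ℝ) (d : ℝ) (hderiv : HasDerivAt u d θ)
    (hrange : u θ ∈ Set.Ioo 0 (uMax γ c₀))
    (hode : (sonic γ c₀ (u θ) ^ 2 - u θ ^ 2) * d +
        Real.cot θ * sonic γ c₀ (u θ) ^ 2 * u θ = 0) :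
    u θ ≠ cStar γ c₀ := by
  intro heq
  obtain ⟨hu0, humax⟩ := hrange
  have hγ1 : (0:ℝ) < γ + 1 := by linarith
  have harg : (0:ℝ) ≤ 2 * c₀ ^ 2 / (γ + 1) := by positivity
  have hcs : cStar γ c₀ ^ 2 = 2 * c₀ ^ 2 / (γ + 1) := Real.sq_sqrt harg
  have hsonic : sonic γ c₀ (u θ) ^ 2 = u θ ^ 2 := by
    rw [heq, sonic, Real.sq_sqrt, hcs]
    · field_simp
      ring
    · rw [hcs]
      have : (γ - 1) / 2 * (2 * c₀ ^ 2 / (γ + 1)) = (γ - 1) * c₀ ^ 2 / (γ + 1) := by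
        field_simp
      rw [this, sub_nonneg, div_le_iff₀ hγ1]
      nlinarith
  rw [hsonic, sub_self, zero_mul, zero_add] at hode
  have hsin : 0 < Real.sin θ := Real.sin_pos_of_pos_of_lt_pi hθ.1 hθ.2
  have hune : u θ ≠ 0 := ne_of_gt hu0
  have hu2 : u θ ^ 2 ≠ 0 := pow_ne_zero _ hune
  have hcot : Real.cot θ = 0 := by
    rcases mul_eq_zero.mp hode with h | h
    · rcases mul_eq_zero.mp h with h | h
      · exact h
      · exact absurd h hu2
    · exact absurd h hune
  rw [Real.cot_eq_cos_div_sin, div_eq_zero_iff] at hcot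
  have hcos : Real.cos θ = 0 := hcot.resolve_right (ne_of_gt hsin)
  rw [Real.cos_eq_zero_iff] at hcos
  obtain ⟨k, hk⟩ := hcos
  have : θ = π / 2 := by
    rcases lt_trichotomy k 0 with h | h | h
    · have : (k:ℝ) ≤ -1 := by exact_mod_cast (by omega : k ≤ -1)
      have := Real.pi_pos
      nlinarith [hθ.1]
    · rw [h] at hk; push_cast at hk; linarith
    · have : (1:ℝ) ≤ (k:ℝ) := by exact_mod_cast h
      have := Real.pi_pos
      nlinarith [hθ.2]
  exact hθne this
end

section
/- (Supersonic Cauchy problem.) Let θ₀ ∈ (0, π/2) and u₀ ∈ (c_*, u_max). Then there exists a unique C¹ function u : [θ₀, π/2] → ℝ with u(θ₀) = u₀, c_* < u(θ) < u_max for all θ, satisfying u′(θ) = cot θ·c(u(θ))²·u(θ)/(u(θ)² − c(u(θ))²) on [θ₀, π/2]; moreover u is strictly increasing on [θ₀, π/2]. -/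
open Real Set Filter Topology

/-
Along a solution the mass flux satisfies `d/dθ (F(u) sin θ) = F'(u) u' sin θ + F(u) cos θ = 0`,
since `F'(u) = ρ(u) (1 - u² / c(u)²)` turns the equation into `F'(u) u' = -F(u) cot θ`.
On the supersonic branch `(c_*, u_max)` the flux decreases strictly from `F(c_*)` to
`F(u_max) = 0`, so the solution is `u(θ) = F⁻¹(F(u₀) sin θ₀ / sin θ)`, which stays on the branch
as long as `sin θ ≥ sin θ₀`. It is `C¹` by the inverse function theorem, unique because every
solution conserves `F(u) sin θ`, and increasing because `sin` increases on `[θ₀, π/2]`.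
-/

noncomputable def fluxDeriv (γ c₀ x : ℝ) : ℝ := dens γ c₀ x * (1 - x ^ 2 / sonic γ c₀ x ^ 2)

noncomputable def speedRHS (γ c₀ θ x : ℝ) : ℝ :=
  cot θ * sonic γ c₀ x ^ 2 * x / (x ^ 2 - sonic γ c₀ x ^ 2)

section GasDynamics

variable {γ c₀ x : ℝ}

lemma sq_sonic (hx : 0 ≤ c₀ ^ 2 - (γ - 1) / 2 * x ^ 2) :
    sonic γ c₀ x ^ 2 = c₀ ^ 2 - (γ - 1) / 2 * x ^ 2 :=
  sq_sqrt hx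

lemma sonic_pos (hγ : 1 < γ) (hx : |x| < uMax γ c₀) : 0 < sonic γ c₀ x := by
  have hγ' : 0 < γ - 1 := by linarith
  have hx2 : x ^ 2 < 2 * c₀ ^ 2 / (γ - 1) := by
    rw [← sq_abs, ← sq_sqrt (by positivity : 0 ≤ 2 * c₀ ^ 2 / (γ - 1))]
    exact pow_lt_pow_left₀ hx (abs_nonneg x) two_ne_zero
  rw [lt_div_iff₀ hγ'] at hx2
  exact sqrt_pos.2 (by nlinarith)

lemma sonic_pos_of_mem_Ioo (hγ : 1 < γ) (hx : x ∈ Ioo (cStar γ c₀) (uMax γ c₀)) :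
    0 < sonic γ c₀ x :=
  sonic_pos hγ (by rw [abs_of_pos ((sqrt_nonneg _).trans_lt hx.1)]; exact hx.2)

lemma sonic_lt (hγ : 1 < γ) (hx : cStar γ c₀ < x) : sonic γ c₀ x < x := by
  have hx2 : 2 * c₀ ^ 2 / (γ + 1) < x ^ 2 := by
    rw [← sq_sqrt (by positivity : 0 ≤ 2 * c₀ ^ 2 / (γ + 1))]
    exact pow_lt_pow_left₀ hx (sqrt_nonneg _) two_ne_zero
  rw [div_lt_iff₀ (by linarith)] at hx2
  refine (sqrt_lt' ((sqrt_nonneg _).trans_lt hx)).2 ?_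
  nlinarith

lemma cStar_lt_uMax (hγ : 1 < γ) (hc₀ : 0 < c₀) : cStar γ c₀ < uMax γ c₀ := by
  refine sqrt_lt_sqrt (by positivity) ?_
  rw [div_lt_div_iff₀ (by linarith) (by linarith)]
  nlinarith [sq_pos_of_pos hc₀]

lemma continuous_flux (hγ : 1 < γ) : Continuous (flux γ c₀) := by
  have : 0 ≤ 1 / (γ - 1) := div_nonneg zero_le_one (by linarith)
  exact ((continuous_const.sub (continuous_const.mul (continuous_pow 2))).div_const γ
    |>.rpow_const fun _ => Or.inr this).mul continuous_id

lemma flux_uMax (hγ : 1 < γ) : flux γ c₀ (uMax γ c₀) = 0 := by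
  have hγ' : 0 < γ - 1 := by linarith
  have : c₀ ^ 2 - (γ - 1) / 2 * uMax γ c₀ ^ 2 = 0 := by
    rw [uMax, sq_sqrt (by positivity)]
    field_simp
    ring
  rw [flux, dens, this, zero_div, zero_rpow (by positivity), zero_mul]

lemma hasStrictDerivAt_flux (hγ : 1 < γ) (hx : 0 < sonic γ c₀ x) :
    HasStrictDerivAt (flux γ c₀) (fluxDeriv γ c₀ x) x := by
  have hγ' : 0 < γ - 1 := by linarith
  have hq : 0 < c₀ ^ 2 - (γ - 1) / 2 * x ^ 2 := sqrt_pos.1 hx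
  rw [fluxDeriv, sq_sonic hq.le]
  have hP : HasStrictDerivAt (fun y => (c₀ ^ 2 - (γ - 1) / 2 * y ^ 2) / γ)
      (-((γ - 1) * x) / γ) x :=
    (((hasStrictDerivAt_pow 2 x).const_mul ((γ - 1) / 2)).const_sub (c₀ ^ 2)).div_const γ
      |>.congr_deriv (by push_cast; ring)
  have hρ : HasStrictDerivAt (dens γ c₀) (1 / (γ - 1) *
      ((c₀ ^ 2 - (γ - 1) / 2 * x ^ 2) / γ) ^ (1 / (γ - 1) - 1) * (-((γ - 1) * x) / γ)) x :=
    (hasStrictDerivAt_rpow_const_of_ne (by positivity) _).comp x hP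
  refine (hρ.mul (hasStrictDerivAt_id x)).congr_deriv ?_
  rw [dens, id_eq, rpow_sub_one (by positivity)]
  field_simp
  ring

lemma fluxDeriv_neg (hγ : 1 < γ) (hx : x ∈ Ioo (cStar γ c₀) (uMax γ c₀)) :
    fluxDeriv γ c₀ x < 0 := by
  have hc := sonic_pos_of_mem_Ioo hγ hx
  rw [fluxDeriv]
  refine mul_neg_of_pos_of_neg (rpow_pos_of_pos (div_pos (sqrt_pos.1 hc) (by linarith)) _) ?_
  rw [sub_neg, one_lt_div (by positivity)]
  exact pow_lt_pow_left₀ (sonic_lt hγ hx.1) hc.le two_ne_zero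

lemma strictAntiOn_flux (hγ : 1 < γ) :
    StrictAntiOn (flux γ c₀) (Icc (cStar γ c₀) (uMax γ c₀)) := by
  refine strictAntiOn_of_deriv_neg (convex_Icc _ _) (continuous_flux hγ).continuousOn ?_
  rw [interior_Icc]
  intro x hx
  rw [(hasStrictDerivAt_flux hγ (sonic_pos_of_mem_Ioo hγ hx)).hasDerivAt.deriv]
  exact fluxDeriv_neg hγ hx

lemma Ioo_subset_image_flux (hγ : 1 < γ) (hc₀ : 0 < c₀) :
    Ioo 0 (flux γ c₀ (cStar γ c₀)) ⊆ flux γ c₀ '' Ioo (cStar γ c₀) (uMax γ c₀) := by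
  simpa only [flux_uMax hγ] using
    intermediate_value_Ioo' (f := flux γ c₀) (cStar_lt_uMax hγ hc₀).le
      (continuous_flux hγ).continuousOn

lemma flux_mem_Ioo (hγ : 1 < γ) (hc₀ : 0 < c₀) (hx : x ∈ Ioo (cStar γ c₀) (uMax γ c₀)) :
    flux γ c₀ x ∈ Ioo 0 (flux γ c₀ (cStar γ c₀)) := by
  have hlt := cStar_lt_uMax hγ hc₀
  have hx' := Ioo_subset_Icc_self hx
  refine ⟨?_, strictAntiOn_flux hγ ⟨le_rfl, hlt.le⟩ hx' hx.1⟩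
  simpa only [flux_uMax hγ] using strictAntiOn_flux hγ hx' ⟨hlt.le, le_rfl⟩ hx.2

lemma fluxDeriv_mul_speedRHS (hx : 0 < sonic γ c₀ x) (hsup : sonic γ c₀ x < x) (θ : ℝ) :
    fluxDeriv γ c₀ x * speedRHS γ c₀ θ x = -(flux γ c₀ x * cot θ) := by
  have : x ^ 2 - sonic γ c₀ x ^ 2 ≠ 0 := by nlinarith
  rw [fluxDeriv, speedRHS, flux]
  field_simp
  ring

end GasDynamics

theorem HasStrictDerivAt.hasDerivAt_of_eventually_comp_eq {𝕜 : Type*} [NontriviallyNormedField 𝕜]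
    [CompleteSpace 𝕜] {Φ u h : 𝕜 → 𝕜} {S : Set 𝕜} {Φ' h' t : 𝕜}
    (hΦ : HasStrictDerivAt Φ Φ' (u t)) (hΦ' : Φ' ≠ 0) (hS : IsOpen S) (hΦS : InjOn Φ S)
    (hh : HasDerivAt h h' t) (hu : ∀ᶠ s in 𝓝 t, u s ∈ S ∧ Φ (u s) = h s) :
    HasDerivAt u (Φ'⁻¹ * h') t := by
  set g := hΦ.localInverse Φ Φ' (u t) hΦ'
  have hht : h t = Φ (u t) := hu.self_of_nhds.2.symm
  have hg : HasDerivAt g Φ'⁻¹ (h t) := hht ▸ hΦ.to_localInverse hΦ'|>.hasDerivAt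
  have hgh_mem : ∀ᶠ s in 𝓝 t, g (h s) ∈ S := by
    have : g (h t) = u t := by
      rw [hht]; exact (hΦ.hasStrictFDerivAt_equiv hΦ').localInverse_apply_image
    refine (hg.continuousAt.comp hh.continuousAt).eventually_mem (hS.mem_nhds ?_)
    simpa only [Function.comp_apply, this] using hu.self_of_nhds.1
  have hgh_inv : ∀ᶠ s in 𝓝 t, Φ (g (h s)) = h s :=
    hh.continuousAt.eventually (hht ▸ hΦ.eventually_right_inverse hΦ')
  refine (hg.comp t hh).congr_of_eventuallyEq ?_
  filter_upwards [hu, hgh_mem, hgh_inv] with s ⟨hus, hΦu⟩ hgs hΦg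
  exact hΦS hus hgs (hΦu.trans hΦg.symm)

noncomputable def supersonicSolution (γ c₀ K θ : ℝ) : ℝ :=
  Function.invFunOn (flux γ c₀) (Ioo (cStar γ c₀) (uMax γ c₀)) (K / sin θ)

section SupersonicSolution

variable {γ c₀ K θ : ℝ}

lemma flux_cStar_pos (hγ : 1 < γ) (hc₀ : 0 < c₀) : 0 < flux γ c₀ (cStar γ c₀) := by
  have h := cStar_lt_uMax hγ hc₀
  simpa only [flux_uMax hγ] using
    strictAntiOn_flux hγ ⟨le_rfl, h.le⟩ ⟨h.le, le_rfl⟩ h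

lemma sin_pos_of_lt_flux_cStar_mul_sin (hγ : 1 < γ) (hc₀ : 0 < c₀) (hK : 0 < K)
    (hθ : K < flux γ c₀ (cStar γ c₀) * sin θ) : 0 < sin θ :=
  pos_of_mul_pos_right (hK.trans hθ) (flux_cStar_pos hγ hc₀).le

lemma supersonicSolution_spec (hγ : 1 < γ) (hc₀ : 0 < c₀) (hK : 0 < K)
    (hθ : K < flux γ c₀ (cStar γ c₀) * sin θ) :
    supersonicSolution γ c₀ K θ ∈ Ioo (cStar γ c₀) (uMax γ c₀) ∧
      flux γ c₀ (supersonicSolution γ c₀ K θ) = K / sin θ := by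
  have hsin := sin_pos_of_lt_flux_cStar_mul_sin hγ hc₀ hK hθ
  have hmem : K / sin θ ∈ flux γ c₀ '' Ioo (cStar γ c₀) (uMax γ c₀) :=
    Ioo_subset_image_flux hγ hc₀ ⟨div_pos hK hsin, (div_lt_iff₀ hsin).2 hθ⟩
  exact ⟨Function.invFunOn_mem hmem, Function.invFunOn_eq hmem⟩

lemma hasDerivAt_supersonicSolution (hγ : 1 < γ) (hc₀ : 0 < c₀) (hK : 0 < K)
    (hθ : K < flux γ c₀ (cStar γ c₀) * sin θ) :
    HasDerivAt (supersonicSolution γ c₀ K)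
      (speedRHS γ c₀ θ (supersonicSolution γ c₀ K θ)) θ := by
  set u := supersonicSolution γ c₀ K
  have hsin := sin_pos_of_lt_flux_cStar_mul_sin hγ hc₀ hK hθ
  obtain ⟨hu, hFu⟩ := supersonicSolution_spec hγ hc₀ hK hθ
  have hc := sonic_pos_of_mem_Ioo hγ hu
  have hF' := hasStrictDerivAt_flux hγ hc
  have hF'_ne : fluxDeriv γ c₀ (u θ) ≠ 0 := (fluxDeriv_neg hγ hu).ne
  have hK_sin : HasDerivAt (fun t => K / sin t) ((0 * sin θ - K * cos θ) / sin θ ^ 2) θ :=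
    (hasDerivAt_const θ K).div (hasDerivAt_sin θ) hsin.ne'
  have hnear : ∀ᶠ t in 𝓝 θ, u t ∈ Ioo (cStar γ c₀) (uMax γ c₀) ∧ flux γ c₀ (u t) = K / sin t :=
    (isOpen_lt continuous_const (continuous_const.mul continuous_sin)).eventually_mem hθ
      |>.mono fun t ht => supersonicSolution_spec hγ hc₀ hK ht
  refine (hF'.hasDerivAt_of_eventually_comp_eq hF'_ne isOpen_Ioo
    ((strictAntiOn_flux hγ).injOn.mono Ioo_subset_Icc_self) hK_sin hnear).congr_deriv ?_
  rw [eq_comm, eq_inv_mul_iff_mul_eq₀ hF'_ne, fluxDeriv_mul_speedRHS hc (sonic_lt hγ hu.1), hFu,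
    cot_eq_cos_div_sin]
  field_simp
  ring

lemma contDiffOn_supersonicSolution (hγ : 1 < γ) (hc₀ : 0 < c₀) (hK : 0 < K) :
    ContDiffOn ℝ 1 (supersonicSolution γ c₀ K) {θ | K < flux γ c₀ (cStar γ c₀) * sin θ} := by
  set u := supersonicSolution γ c₀ K
  set U := {θ | K < flux γ c₀ (cStar γ c₀) * sin θ}
  have hU : IsOpen U := isOpen_lt continuous_const (continuous_const.mul continuous_sin)
  have hu' := fun θ (hθ : θ ∈ U) => hasDerivAt_supersonicSolution hγ hc₀ hK hθ
  have hu : ContinuousOn u U := fun θ hθ => (hu' θ hθ).continuousAt.continuousWithinAt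
  rw [show (1 : WithTop ℕ∞) = 0 + 1 from rfl, contDiffOn_succ_iff_deriv_of_isOpen hU]
  refine ⟨fun θ hθ => (hu' θ hθ).differentiableAt.differentiableWithinAt, by simp,
    contDiffOn_zero.2 (ContinuousOn.congr ?_ fun θ hθ => (hu' θ hθ).deriv)⟩
  have hcot : ContinuousOn cot U :=
    (continuousOn_cos.div continuousOn_sin fun θ hθ =>
      (sin_pos_of_lt_flux_cStar_mul_sin hγ hc₀ hK hθ).ne').congr fun θ _ => cot_eq_cos_div_sin θ
  have hc : ContinuousOn (fun θ => sonic γ c₀ (u θ)) U :=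
    (continuous_sqrt.comp (continuous_const.sub (continuous_const.mul (continuous_pow 2))))
      |>.comp_continuousOn hu
  refine ((hcot.mul (hc.pow 2)).mul hu).div ((hu.pow 2).sub (hc.pow 2)) fun θ hθ => ?_
  have hmem := (supersonicSolution_spec hγ hc₀ hK hθ).1
  have := sonic_pos_of_mem_Ioo hγ hmem
  have := sonic_lt hγ hmem.1
  nlinarith

lemma strictMonoOn_supersonicSolution (hγ : 1 < γ) (hc₀ : 0 < c₀) (hK : 0 < K) {s : Set ℝ}
    (hs : s ⊆ Icc (-(π / 2)) (π / 2)) (hsK : ∀ θ ∈ s, K < flux γ c₀ (cStar γ c₀) * sin θ) :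
    StrictMonoOn (supersonicSolution γ c₀ K) s := by
  intro a ha b hb hab
  obtain ⟨hua, hFa⟩ := supersonicSolution_spec hγ hc₀ hK (hsK a ha)
  obtain ⟨hub, hFb⟩ := supersonicSolution_spec hγ hc₀ hK (hsK b hb)
  rw [← (strictAntiOn_flux hγ).lt_iff_gt (Ioo_subset_Icc_self hub) (Ioo_subset_Icc_self hua),
    hFa, hFb]
  exact div_lt_div_of_pos_left hK (sin_pos_of_lt_flux_cStar_mul_sin hγ hc₀ hK (hsK a ha))
    (strictMonoOn_sin (hs ha) (hs hb) hab)

lemma supersonicSolution_eq_of_flux_mul_sin_eq (hγ : 1 < γ) (hc₀ : 0 < c₀) (hK : 0 < K)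
    (hθ : K < flux γ c₀ (cStar γ c₀) * sin θ) {x : ℝ} (hx : x ∈ Ioo (cStar γ c₀) (uMax γ c₀))
    (hFx : flux γ c₀ x * sin θ = K) : supersonicSolution γ c₀ K θ = x := by
  obtain ⟨hu, hFu⟩ := supersonicSolution_spec hγ hc₀ hK hθ
  refine (strictAntiOn_flux hγ).injOn (Ioo_subset_Icc_self hu) (Ioo_subset_Icc_self hx) ?_
  rw [hFu, div_eq_iff (sin_pos_of_lt_flux_cStar_mul_sin hγ hc₀ hK hθ).ne', hFx]

end SupersonicSolution

lemma flux_mul_sin_eq_of_hasDerivWithinAt {γ c₀ a b : ℝ} {v : ℝ → ℝ} (hγ : 1 < γ)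
    (hsin : ∀ θ ∈ Icc a b, sin θ ≠ 0) (hv : ∀ θ ∈ Icc a b, v θ ∈ Ioo (cStar γ c₀) (uMax γ c₀))
    (hv' : ∀ θ ∈ Icc a b, HasDerivWithinAt v (speedRHS γ c₀ θ (v θ)) (Icc a b) θ) :
    ∀ θ ∈ Icc a b, flux γ c₀ (v θ) * sin θ = flux γ c₀ (v a) * sin a := by
  refine constant_of_has_deriv_right_zero (fun θ hθ => ?_) fun θ hθ => ?_
  · exact ((continuous_flux hγ).continuousAt.comp_continuousWithinAt
      (hv' θ hθ).continuousWithinAt).mul continuous_sin.continuousWithinAt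
  have hθ' : θ ∈ Icc a b := Ico_subset_Icc_self hθ
  have hc := sonic_pos_of_mem_Ioo hγ (hv θ hθ')
  have hd := ((hasStrictDerivAt_flux hγ hc).hasDerivAt.comp_hasDerivWithinAt θ (hv' θ hθ')).mul
    (hasDerivAt_sin θ).hasDerivWithinAt
  refine (hd.congr_deriv ?_).mono_of_mem_nhdsWithin (Icc_mem_nhdsGE_of_mem hθ)
  rw [fluxDeriv_mul_speedRHS hc (sonic_lt hγ (hv θ hθ').1), cot_eq_cos_div_sin, Function.comp_apply]
  field_simp [hsin θ hθ']
  ring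

/-- the supersonic Cauchy problem: for `θ₀ ∈ (0, π/2)` and
`u₀ ∈ (c_*, u_max)` there is a unique C¹ solution on `[θ₀, π/2]` of
`u′ = cot θ · c(u)²u/(u² − c(u)²)` with `u(θ₀) = u₀`, staying supersonic, and it is
strictly increasing. -/
theorem supersonic_cauchy_problem (γ c₀ θ₀ u₀ : ℝ) (hγ : 1 < γ) (hc₀ : 0 < c₀)
    (hθ₀ : θ₀ ∈ Set.Ioo 0 (π / 2)) (hu₀ : u₀ ∈ Set.Ioo (cStar γ c₀) (uMax γ c₀)) :
    ∃ u : ℝ → ℝ,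
      (ContDiffOn ℝ 1 u (Set.Icc θ₀ (π / 2)) ∧
        u θ₀ = u₀ ∧
        (∀ θ ∈ Set.Icc θ₀ (π / 2), u θ ∈ Set.Ioo (cStar γ c₀) (uMax γ c₀)) ∧
        (∀ θ ∈ Set.Icc θ₀ (π / 2),
          HasDerivWithinAt u
            (Real.cot θ * sonic γ c₀ (u θ) ^ 2 * u θ / (u θ ^ 2 - sonic γ c₀ (u θ) ^ 2))
            (Set.Icc θ₀ (π / 2)) θ)) ∧
      StrictMonoOn u (Set.Icc θ₀ (π / 2)) ∧
      ∀ v : ℝ → ℝ,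
        (ContDiffOn ℝ 1 v (Set.Icc θ₀ (π / 2)) ∧
          v θ₀ = u₀ ∧
          (∀ θ ∈ Set.Icc θ₀ (π / 2), v θ ∈ Set.Ioo (cStar γ c₀) (uMax γ c₀)) ∧
          (∀ θ ∈ Set.Icc θ₀ (π / 2),
            HasDerivWithinAt v
              (Real.cot θ * sonic γ c₀ (v θ) ^ 2 * v θ / (v θ ^ 2 - sonic γ c₀ (v θ) ^ 2))
              (Set.Icc θ₀ (π / 2)) θ)) →
        Set.EqOn u v (Set.Icc θ₀ (π / 2)) := by
  obtain ⟨hθ₀pos, hθ₀lt⟩ := hθ₀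
  set K := flux γ c₀ u₀ * sin θ₀
  have hI : Icc θ₀ (π / 2) ⊆ Icc (-(π / 2)) (π / 2) := Icc_subset_Icc_left (by linarith)
  have hsin₀ : 0 < sin θ₀ := sin_pos_of_pos_of_lt_pi hθ₀pos (by linarith)
  have hFu₀ := flux_mem_Ioo hγ hc₀ hu₀
  have hK : 0 < K := mul_pos hFu₀.1 hsin₀
  have hIK : ∀ θ ∈ Icc θ₀ (π / 2), K < flux γ c₀ (cStar γ c₀) * sin θ := fun θ hθ =>
    (mul_lt_mul_of_pos_right hFu₀.2 hsin₀).trans_le <| mul_le_mul_of_nonneg_left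
      (sin_le_sin_of_le_of_le_pi_div_two (hI ⟨le_rfl, hθ₀lt.le⟩).1 hθ.2 hθ.1)
      (flux_cStar_pos hγ hc₀).le
  refine ⟨supersonicSolution γ c₀ K, ⟨(contDiffOn_supersonicSolution hγ hc₀ hK).mono hIK,
    supersonicSolution_eq_of_flux_mul_sin_eq hγ hc₀ hK (hIK θ₀ ⟨le_rfl, hθ₀lt.le⟩) hu₀ rfl,
    fun θ hθ => (supersonicSolution_spec hγ hc₀ hK (hIK θ hθ)).1,
    fun θ hθ => (hasDerivAt_supersonicSolution hγ hc₀ hK (hIK θ hθ)).hasDerivWithinAt⟩,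
    strictMonoOn_supersonicSolution hγ hc₀ hK hI hIK, ?_⟩
  rintro v ⟨-, hv₀, hv, hv'⟩ θ hθ
  have hsin : ∀ t ∈ Icc θ₀ (π / 2), sin t ≠ 0 := fun t ht =>
    (sin_pos_of_lt_flux_cStar_mul_sin hγ hc₀ hK (hIK t ht)).ne'
  refine supersonicSolution_eq_of_flux_mul_sin_eq hγ hc₀ hK (hIK θ hθ) (hv θ hθ) ?_
  rw [flux_mul_sin_eq_of_hasDerivWithinAt hγ hsin hv hv' θ hθ, hv₀]
end
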